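/- Let C1 ≥ C2 > 0. The compression capacity of the model (01;C1,C2;f) equals (C1 − C2)·log_3 2 + C2. That is, the supremum, over all positive integers k and all admissible k-shot codes (φ1, φ2), of the rate k / max(⌈log|Im φ1| / C1⌉, ⌈log|Im φ2| / C2⌉) equals (C1 − C2)·log_3 2 + C2. -/

import Mathlib

/-!
Converse. Fix a value `t` of `φ2`. The decoder recovers every `x + y` with `φ2 y = t` from
`φ1 (x, y)` alone, so the fibre `Y = φ2⁻¹ t` satisfies `|Y + {0,1}^k| ≤ |Im φ1|`. Splitting on the
first coordinate and using the concavity of `s ↦ s ^ κ`, `κ = log₂ (3/2)`, one gets the sumset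
bound `|Y + {0,1}^k| ≥ 2^k |Y|^κ`. Applied to a fibre of size at least `2^k / |Im φ2|` it gives
`k log₂ 3 ≤ log |Im φ1| + κ log |Im φ2|`. With `log |Im φi| ≤ n Ci` for the code length `n`
this is `k ≤ n (C1 + κ C2) / log₂ 3`, and `(C1 + κ C2) / log₂ 3` is the claimed capacity.

Achievability. On a fraction `C2 / capacity` of the coordinates both encoders send their bits;
on the others encoder 1 sends `x i + y i ∈ {0,1,2}`. The rate of this code is the capacity up to
an error `O(1/k)`.
-/

/-- The componentwise integer sum of two binary vectors. -/
def vsum {k : ℕ} (x y : Fin k → Fin 2) : Fin k → ℕ := fun i => (x i : ℕ) + (y i : ℕ)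

/-- The cardinality of the image of an encoding map defined on `A^k × A^k`. -/
def imCard1 {k : ℕ} (φ : (Fin k → Fin 2) × (Fin k → Fin 2) → ℕ) : ℕ :=
  (Finset.univ.image φ).card

/-- The cardinality of the image of an encoding map defined on `A^k`. -/
def imCard2 {k : ℕ} (φ : (Fin k → Fin 2) → ℕ) : ℕ := (Finset.univ.image φ).card

/-- Admissibility for the model (01;C1,C2;f): there is a decoder that recovers `x + y`
with zero error from the encoder outputs `φ1 (x, y)` and `φ2 y`. -/
def Admissible01 {k : ℕ} (φ1 : (Fin k → Fin 2) × (Fin k → Fin 2) → ℕ)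
    (φ2 : (Fin k → Fin 2) → ℕ) : Prop :=
  ∃ ψ : ℕ → ℕ → (Fin k → ℕ), ∀ x y : Fin k → Fin 2, ψ (φ1 (x, y)) (φ2 y) = vsum x y

/-- The rate of a k-shot code: `k / max(⌈log|Im φ1| / C1⌉, ⌈log|Im φ2| / C2⌉)`,
logarithms in base 2. -/
noncomputable def rate01 (C1 C2 : ℝ) {k : ℕ}
    (φ1 : (Fin k → Fin 2) × (Fin k → Fin 2) → ℕ) (φ2 : (Fin k → Fin 2) → ℕ) : ℝ :=
  (k : ℝ) /
    ((max ⌈Real.logb 2 (imCard1 φ1) / C1⌉ ⌈Real.logb 2 (imCard2 φ2) / C2⌉ : ℤ) : ℝ)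

open Finset Real

theorem ConcaveOn.add_le_map_comb_add_map_comb {E : Type*} [AddCommGroup E] [Module ℝ E]
    {s : Set E} {f : E → ℝ} (hf : ConcaveOn ℝ s f) {x w : E} (hx : x ∈ s) (hw : w ∈ s)
    {t : ℝ} (ht₀ : 0 ≤ t) (ht₁ : t ≤ 1) :
    f x + f w ≤ f ((1 - t) • x + t • w) + f (t • x + (1 - t) • w) := by
  have h₁ := hf.2 hx hw (sub_nonneg.2 ht₁) ht₀ (by ring)
  have h₂ := hf.2 hx hw ht₀ (sub_nonneg.2 ht₁) (by ring)
  simp only [smul_eq_mul] at h₁ h₂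
  linarith

lemma logb_two_three_halves_pos : 0 < logb 2 (3 / 2) := logb_pos (by norm_num) (by norm_num)

lemma logb_two_three_halves_lt_one : logb 2 (3 / 2) < 1 := by
  rw [logb_lt_iff_lt_rpow (by norm_num) (by norm_num)]
  norm_num

lemma logb_two_three_halves : logb 2 (3 / 2) = logb 2 3 - 1 := by
  rw [logb_div (by norm_num) (by norm_num), logb_self_eq_one one_lt_two]

lemma two_mul_add_rpow_le {a b : ℝ} (ha : 0 ≤ a) (hb : 0 ≤ b) :
    2 * (a + b) ^ logb 2 (3 / 2) ≤
      a ^ logb 2 (3 / 2) + max a b ^ logb 2 (3 / 2) + b ^ logb 2 (3 / 2) := by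
  wlog hba : b ≤ a generalizing a b
  · have := this hb ha (le_of_not_ge hba)
    rw [max_comm, add_comm b a] at this
    linarith
  rcases ha.eq_or_lt with rfl | ha
  · obtain rfl : b = 0 := le_antisymm hba hb
    rw [add_zero, max_self, zero_rpow logb_two_three_halves_pos.ne']
    norm_num
  -- `a` and `2 b` lie between `b` and `a + b`, with the same sum
  have hconc := (concaveOn_rpow logb_two_three_halves_pos.le
    logb_two_three_halves_lt_one.le).add_le_map_comb_add_map_comb
    (Set.mem_Ici.2 hb) (Set.mem_Ici.2 (add_nonneg ha.le hb))
    (div_nonneg hb ha.le) (div_le_one_of_le₀ hba ha.le)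
  have h₁ : (1 - b / a) • b + (b / a) • (a + b) = 2 * b := by
    simp only [smul_eq_mul]; field_simp; ring
  have h₂ : (b / a) • b + (1 - b / a) • (a + b) = a := by
    simp only [smul_eq_mul]; field_simp; ring
  have h₃ : (2 * b) ^ logb 2 (3 / 2) = 3 / 2 * b ^ logb 2 (3 / 2) := by
    rw [mul_rpow zero_le_two hb, rpow_logb (by norm_num) (by norm_num) (by norm_num)]
  simp only [h₁, h₂, h₃] at hconc
  rw [max_eq_left hba]
  linarith

def sumset {k : ℕ} (Y : Finset (Fin k → Fin 2)) : Finset (Fin k → ℕ) := image₂ vsum univ Y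

lemma vsum_cons {k : ℕ} (a b : Fin 2) (x y : Fin k → Fin 2) :
    vsum (Fin.cons a x) (Fin.cons b y) = Fin.cons ((a : ℕ) + b) (vsum x y) := by
  ext i
  refine Fin.cases ?_ (fun i => ?_) i <;> simp [vsum]

section HeadFiber

variable {α : Type*} [DecidableEq α] {k : ℕ}

def headFiber (Z : Finset (Fin (k + 1) → α)) (v : α) : Finset (Fin k → α) :=
  {z ∈ Z | z 0 = v}.image Fin.tail

lemma mem_headFiber {Z : Finset (Fin (k + 1) → α)} {v : α} {t : Fin k → α} :
    t ∈ headFiber Z v ↔ Fin.cons v t ∈ Z := by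
  constructor
  · intro hmem
    obtain ⟨z, hz, rfl⟩ := mem_image.1 hmem
    obtain ⟨hzZ, rfl⟩ := mem_filter.1 hz
    rwa [Fin.cons_self_tail]
  · intro h
    exact mem_image.2 ⟨_, mem_filter.2 ⟨h, Fin.cons_zero _ _⟩, Fin.tail_cons _ _⟩

lemma sum_card_headFiber_le (Z : Finset (Fin (k + 1) → α)) (V : Finset α) :
    ∑ v ∈ V, #(headFiber Z v) ≤ #Z :=
  calc ∑ v ∈ V, #(headFiber Z v) ≤ ∑ v ∈ V, #{z ∈ Z | z 0 = v} :=
        sum_le_sum fun _ _ => card_image_le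
    _ = #{z ∈ Z | z 0 ∈ V} := sum_card_fiberwise_eq_card_filter _ _ _
    _ ≤ #Z := card_filter_le _ _

lemma card_eq_sum_card_headFiber [Fintype α] (Z : Finset (Fin (k + 1) → α)) :
    #Z = ∑ v, #(headFiber Z v) := by
  rw [card_eq_sum_card_fiberwise (f := fun z => z 0) (t := univ) fun _ _ => mem_coe.2 (mem_univ _)]
  refine sum_congr rfl fun v _ => (card_image_of_injOn ?_).symm
  intro z hz z' hz' h
  rw [← Fin.cons_self_tail z, ← Fin.cons_self_tail z', (mem_filter.1 hz).2,
    (mem_filter.1 hz').2, h]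

end HeadFiber

lemma sumset_headFiber_subset {k : ℕ} (Y : Finset (Fin (k + 1) → Fin 2)) (a b : Fin 2) :
    sumset (headFiber Y b) ⊆ headFiber (sumset Y) ((a : ℕ) + b) := by
  intro z hz
  obtain ⟨x, -, t, ht, rfl⟩ := mem_image₂.1 hz
  rw [mem_headFiber, ← vsum_cons]
  exact mem_image₂_of_mem (mem_univ _) (mem_headFiber.1 ht)

-- The first coordinate of `x + y` is `0`, `1` or `2`, and `1` is reached from either head of `y`.
lemma card_sumset_headFiber_add_le {k : ℕ} (Y : Finset (Fin (k + 1) → Fin 2)) (b : Fin 2) :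
    #(sumset (headFiber Y 0)) + #(sumset (headFiber Y b)) + #(sumset (headFiber Y 1)) ≤
      #(sumset Y) := by
  have hmid : sumset (headFiber Y b) ⊆ headFiber (sumset Y) 1 := by
    fin_cases b
    · exact sumset_headFiber_subset Y 1 0
    · exact sumset_headFiber_subset Y 0 1
  calc _ ≤ #(headFiber (sumset Y) 0) + #(headFiber (sumset Y) 1) + #(headFiber (sumset Y) 2) := by
        gcongr ?_ + ?_ + ?_
        exacts [card_le_card (sumset_headFiber_subset Y 0 0), card_le_card hmid,
          card_le_card (sumset_headFiber_subset Y 1 1)]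
    _ = ∑ v ∈ range 3, #(headFiber (sumset Y) v) := by simp [sum_range_succ]
    _ ≤ #(sumset Y) := sum_card_headFiber_le _ _

theorem two_pow_mul_card_rpow_le_card_sumset :
    ∀ {k : ℕ} (Y : Finset (Fin k → Fin 2)), 2 ^ k * (#Y : ℝ) ^ logb 2 (3 / 2) ≤ #(sumset Y)
  | 0, Y => by
    rcases Y.eq_empty_or_nonempty with rfl | hY
    · simp [zero_rpow logb_two_three_halves_pos.ne']
    · have hcard : #Y = 1 := le_antisymm ((card_le_univ Y).trans (by simp)) hY.card_pos
      have hsum : 0 < #(sumset Y) := (univ_nonempty.image₂ hY).card_pos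
      rw [hcard, Nat.cast_one, one_rpow, mul_one, pow_zero]
      exact_mod_cast hsum
  | k + 1, Y => by
    set a : ℝ := (#(headFiber Y 0) : ℝ)
    set b : ℝ := (#(headFiber Y 1) : ℝ)
    have hY : (#Y : ℝ) = a + b := by
      rw [card_eq_sum_card_headFiber, Fin.sum_univ_two]; push_cast; rfl
    obtain ⟨β, hβ⟩ : ∃ β, 2 ^ k * max a b ^ logb 2 (3 / 2) ≤ #(sumset (headFiber Y β)) := by
      rcases le_total a b with h | h
      · exact ⟨1, by rw [max_eq_right h]; exact two_pow_mul_card_rpow_le_card_sumset _⟩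
      · exact ⟨0, by rw [max_eq_left h]; exact two_pow_mul_card_rpow_le_card_sumset _⟩
    have h₀ := two_pow_mul_card_rpow_le_card_sumset (headFiber Y 0)
    have h₁ := two_pow_mul_card_rpow_le_card_sumset (headFiber Y 1)
    have hkey := two_mul_add_rpow_le (a := a) (b := b) (Nat.cast_nonneg _) (Nat.cast_nonneg _)
    have hcard : ((#(sumset (headFiber Y 0)) + #(sumset (headFiber Y β)) +
        #(sumset (headFiber Y 1)) : ℕ) : ℝ) ≤ #(sumset Y) :=
      Nat.cast_le.2 (card_sumset_headFiber_add_le Y β)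
    push_cast at hcard
    rw [hY, pow_succ]
    nlinarith [pow_pos (two_pos (α := ℝ)) k]

noncomputable def capacity01 (C1 C2 : ℝ) : ℝ := (C1 - C2) * logb 3 2 + C2

lemma capacity01_mul_logb_two_three (C1 C2 : ℝ) :
    capacity01 C1 C2 * logb 2 3 = C1 + (logb 2 3 - 1) * C2 := by
  have h : logb 3 2 * logb 2 3 = 1 := by
    rw [← inv_logb, inv_mul_cancel₀ (logb_pos one_lt_two (by norm_num)).ne']
  rw [capacity01]
  linear_combination (C1 - C2) * h

lemma one_lt_logb_two_three : 1 < logb 2 3 := by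
  linarith [logb_two_three_halves_pos, logb_two_three_halves]

lemma capacity01_pos {C1 C2 : ℝ} (hC1 : 0 < C1) (hC2 : 0 < C2) : 0 < capacity01 C1 C2 := by
  have h := capacity01_mul_logb_two_three C1 C2
  have hl := one_lt_logb_two_three
  by_contra! hle
  nlinarith

noncomputable def codeLength (C1 C2 : ℝ) {k : ℕ}
    (φ1 : (Fin k → Fin 2) × (Fin k → Fin 2) → ℕ) (φ2 : (Fin k → Fin 2) → ℕ) : ℤ :=
  max ⌈logb 2 (imCard1 φ1) / C1⌉ ⌈logb 2 (imCard2 φ2) / C2⌉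

lemma rate01_eq (C1 C2 : ℝ) {k : ℕ}
    (φ1 : (Fin k → Fin 2) × (Fin k → Fin 2) → ℕ) (φ2 : (Fin k → Fin 2) → ℕ) :
    rate01 C1 C2 φ1 φ2 = k / codeLength C1 C2 φ1 φ2 := rfl

lemma imCard1_pos {k : ℕ} (φ1 : (Fin k → Fin 2) × (Fin k → Fin 2) → ℕ) : 0 < imCard1 φ1 :=
  (univ_nonempty.image _).card_pos

lemma imCard2_pos {k : ℕ} (φ2 : (Fin k → Fin 2) → ℕ) : 0 < imCard2 φ2 :=
  (univ_nonempty.image _).card_pos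

lemma exists_two_pow_le_imCard2_mul_card_fiber {k : ℕ} (φ2 : (Fin k → Fin 2) → ℕ) :
    ∃ t, (2 : ℝ) ^ k ≤ imCard2 φ2 * #{y | φ2 y = t} := by
  have hM : (0 : ℝ) < imCard2 φ2 := Nat.cast_pos.2 (imCard2_pos φ2)
  obtain ⟨t, -, ht⟩ := exists_le_card_fiber_of_nsmul_le_card_of_maps_to
    (s := univ) (b := (2 : ℝ) ^ k / imCard2 φ2) (fun y _ => mem_image_of_mem φ2 (mem_univ y))
    (univ_nonempty.image _) (by
      rw [nsmul_eq_mul, ← imCard2, mul_div_cancel₀ _ hM.ne', card_univ]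
      simp)
  exact ⟨t, by rwa [div_le_iff₀' hM] at ht⟩

namespace Admissible01

variable {k : ℕ} {φ1 : (Fin k → Fin 2) × (Fin k → Fin 2) → ℕ} {φ2 : (Fin k → Fin 2) → ℕ}

lemma card_sumset_fiber_le (h : Admissible01 φ1 φ2) (t : ℕ) :
    #(sumset {y | φ2 y = t}) ≤ imCard1 φ1 := by
  obtain ⟨ψ, hψ⟩ := h
  refine (card_le_card (t := (univ.image φ1).image (ψ · t)) ?_).trans card_image_le
  intro z hz
  obtain ⟨x, -, y, hy, rfl⟩ := mem_image₂.1 hz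
  refine mem_image.2 ⟨φ1 (x, y), mem_image_of_mem _ (mem_univ _), ?_⟩
  rw [← (mem_filter.1 hy).2, hψ]

lemma natCast_mul_logb_two_three_le (h : Admissible01 φ1 φ2) :
    k * logb 2 3 ≤ logb 2 (imCard1 φ1) + (logb 2 3 - 1) * logb 2 (imCard2 φ2) := by
  obtain ⟨t, ht⟩ := exists_two_pow_le_imCard2_mul_card_fiber φ2
  have hM : (0 : ℝ) < imCard2 φ2 := Nat.cast_pos.2 (imCard2_pos φ2)
  have hfiber : (2 : ℝ) ^ k / imCard2 φ2 ≤ #{y | φ2 y = t} := by rwa [div_le_iff₀' hM]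
  have hbound : (2 : ℝ) ^ k * (2 ^ k / imCard2 φ2) ^ logb 2 (3 / 2) ≤ imCard1 φ1 :=
    calc _ ≤ (2 : ℝ) ^ k * (#{y | φ2 y = t} : ℝ) ^ logb 2 (3 / 2) := by
          gcongr; exact logb_two_three_halves_pos.le
      _ ≤ #(sumset {y | φ2 y = t}) := two_pow_mul_card_rpow_le_card_sumset _
      _ ≤ imCard1 φ1 := Nat.cast_le.2 (h.card_sumset_fiber_le t)
  have hlog := logb_le_logb_of_le (b := 2) one_lt_two (by positivity) hbound
  rw [logb_mul (by positivity) (by positivity), logb_rpow_eq_mul_logb_of_pos (by positivity),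
    logb_div (by positivity) hM.ne', logb_pow, logb_self_eq_one one_lt_two,
    logb_two_three_halves] at hlog
  linarith

theorem natCast_le_capacity01_mul_codeLength {C1 C2 : ℝ} (hC1 : 0 < C1) (hC2 : 0 < C2)
    (h : Admissible01 φ1 φ2) : (k : ℝ) ≤ capacity01 C1 C2 * codeLength C1 C2 φ1 φ2 := by
  have hL1 : logb 2 (imCard1 φ1) ≤ C1 * codeLength C1 C2 φ1 φ2 := by
    rw [← div_le_iff₀' hC1]
    exact (Int.le_ceil _).trans (mod_cast le_max_left _ _)
  have hL2 : logb 2 (imCard2 φ2) ≤ C2 * codeLength C1 C2 φ1 φ2 := by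
    rw [← div_le_iff₀' hC2]
    exact (Int.le_ceil _).trans (mod_cast le_max_right _ _)
  have hl := one_lt_logb_two_three
  refine le_of_mul_le_mul_right ?_ (zero_lt_one.trans hl)
  calc (k : ℝ) * logb 2 3
      ≤ logb 2 (imCard1 φ1) + (logb 2 3 - 1) * logb 2 (imCard2 φ2) :=
        h.natCast_mul_logb_two_three_le
    _ ≤ C1 * codeLength C1 C2 φ1 φ2 + (logb 2 3 - 1) * (C2 * codeLength C1 C2 φ1 φ2) := by
        gcongr
    _ = capacity01 C1 C2 * codeLength C1 C2 φ1 φ2 * logb 2 3 := by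
        rw [mul_right_comm, capacity01_mul_logb_two_three]; ring

theorem rate01_le_capacity01 {C1 C2 : ℝ} (hC1 : 0 < C1) (hC2 : 0 < C2) (hk : 0 < k)
    (h : Admissible01 φ1 φ2) : rate01 C1 C2 φ1 φ2 ≤ capacity01 C1 C2 := by
  have hle := h.natCast_le_capacity01_mul_codeLength hC1 hC2
  have hcap := capacity01_pos hC1 hC2
  have hN : (0 : ℝ) < codeLength C1 C2 φ1 φ2 := by
    by_contra! hN
    nlinarith [(Nat.cast_pos (α := ℝ)).2 hk]
  rw [rate01_eq, div_le_iff₀ hN]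
  linarith

end Admissible01

lemma Admissible01.of_vsum_eq {k : ℕ} {φ1 : (Fin k → Fin 2) × (Fin k → Fin 2) → ℕ}
    {φ2 : (Fin k → Fin 2) → ℕ}
    (h : ∀ x y x' y', φ1 (x, y) = φ1 (x', y') → φ2 y = φ2 y' → vsum x y = vsum x' y') :
    Admissible01 φ1 φ2 := by
  classical
  refine ⟨fun a b => if hab : ∃ p : (Fin k → Fin 2) × (Fin k → Fin 2), φ1 p = a ∧ φ2 p.2 = b
    then vsum hab.choose.1 hab.choose.2 else 0, fun x y => ?_⟩
  have hex : ∃ p : (Fin k → Fin 2) × (Fin k → Fin 2), φ1 p = φ1 (x, y) ∧ φ2 p.2 = φ2 y :=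
    ⟨(x, y), rfl, rfl⟩
  dsimp only
  rw [dif_pos hex]
  exact h _ _ x y hex.choose_spec.1 hex.choose_spec.2

noncomputable def encodeFin {α : Type*} [Fintype α] (a : α) : ℕ := Fintype.equivFin α a

lemma encodeFin_injective {α : Type*} [Fintype α] : Function.Injective (encodeFin (α := α)) :=
  Fin.val_injective.comp (Fintype.equivFin α).injective

lemma card_image_comp_le {α β γ : Type*} [Fintype α] [DecidableEq γ] (s : Finset β)
    (f : β → α) (g : α → γ) : #(s.image fun b => g (f b)) ≤ Fintype.card α := by
  calc #(s.image fun b => g (f b)) ≤ #(univ.image g) :=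
        card_le_card (image_subset_iff.2 fun b _ => mem_image_of_mem g (mem_univ (f b)))
    _ ≤ Fintype.card α := card_image_le.trans_eq card_univ

def finAdd (a b : Fin 2) : Fin 3 := ⟨a + b, by omega⟩

section TimeSharing

variable {k : ℕ} (U : Finset (Fin k))

noncomputable def timeShare1 : (Fin k → Fin 2) × (Fin k → Fin 2) → ℕ := fun p =>
  encodeFin ((fun i : U => p.1 i), fun i : ↥Uᶜ => finAdd (p.1 i) (p.2 i))

noncomputable def timeShare2 : (Fin k → Fin 2) → ℕ := fun y => encodeFin fun i : U => y i

lemma admissible01_timeShare : Admissible01 (timeShare1 U) (timeShare2 U) := by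
  refine Admissible01.of_vsum_eq fun x y x' y' h₁ h₂ => funext fun i => ?_
  obtain ⟨hx, hs⟩ := Prod.ext_iff.1 (encodeFin_injective h₁)
  by_cases hi : i ∈ U
  · have hxi := congrFun hx ⟨i, hi⟩
    have hyi := congrFun (encodeFin_injective h₂) ⟨i, hi⟩
    simp only at hxi hyi
    simp [vsum, hxi, hyi]
  · exact congrArg Fin.val (congrFun hs ⟨i, mem_compl.2 hi⟩)

lemma imCard1_timeShare1_le : imCard1 (timeShare1 U) ≤ 2 ^ #U * 3 ^ (k - #U) := by
  refine (card_image_comp_le _ _ encodeFin).trans_eq ?_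
  simp

lemma imCard2_timeShare2_le : imCard2 (timeShare2 U) ≤ 2 ^ #U :=
  (card_image_comp_le _ _ encodeFin).trans_eq (by simp)

end TimeSharing

lemma logb_imCard1_timeShare1_le {k : ℕ} (U : Finset (Fin k)) :
    logb 2 (imCard1 (timeShare1 U)) ≤ #U + (k - #U) * logb 2 3 := by
  have hcast : (imCard1 (timeShare1 U) : ℝ) ≤ 2 ^ #U * 3 ^ (k - #U) :=
    mod_cast imCard1_timeShare1_le U
  refine (logb_le_logb_of_le one_lt_two (Nat.cast_pos.2 (imCard1_pos _)) hcast).trans_eq ?_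
  rw [logb_mul (by positivity) (by positivity), logb_pow, logb_pow, logb_self_eq_one one_lt_two,
    Nat.cast_sub ((card_le_univ U).trans_eq (Fintype.card_fin k)), mul_one]

lemma logb_imCard2_timeShare2_le {k : ℕ} (U : Finset (Fin k)) :
    logb 2 (imCard2 (timeShare2 U)) ≤ #U := by
  have hcast : (imCard2 (timeShare2 U) : ℝ) ≤ 2 ^ #U := mod_cast imCard2_timeShare2_le U
  refine (logb_le_logb_of_le one_lt_two (Nat.cast_pos.2 (imCard2_pos _)) hcast).trans_eq ?_
  rw [logb_pow, logb_self_eq_one one_lt_two, mul_one]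

theorem exists_admissible01_codeLength_le {C1 C2 : ℝ} (hC : C2 ≤ C1) (hC2 : 0 < C2) (k : ℕ) :
    ∃ (φ1 : (Fin k → Fin 2) × (Fin k → Fin 2) → ℕ) (φ2 : (Fin k → Fin 2) → ℕ),
      Admissible01 φ1 φ2 ∧
      (codeLength C1 C2 φ1 φ2 : ℝ) ≤ k / capacity01 C1 C2 + (1 + 1 / C2) := by
  set cap := capacity01 C1 C2
  have hC1 : 0 < C1 := hC2.trans_le hC
  have hcap : 0 < cap := capacity01_pos hC1 hC2
  have hl := one_lt_logb_two_three
  have hmul : cap * logb 2 3 = C1 + (logb 2 3 - 1) * C2 := capacity01_mul_logb_two_three C1 C2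
  have hC2cap : C2 ≤ cap := le_of_mul_le_mul_right (by nlinarith) (zero_lt_one.trans hl)
  -- time-sharing a fraction `C2 / cap` of the coordinates balances the two encoders
  set j := ⌈C2 * k / cap⌉₊
  have hj₁ : C2 * k / cap ≤ j := Nat.le_ceil _
  have hj₂ : (j : ℝ) < C2 * k / cap + 1 := Nat.ceil_lt_add_one (by positivity)
  have hjk : j ≤ k := Nat.ceil_le.2 <| by
    rw [div_le_iff₀ hcap]; nlinarith [(Nat.cast_nonneg k : (0 : ℝ) ≤ k)]
  obtain ⟨U, -, hU⟩ := exists_subset_card_eq (s := (univ : Finset (Fin k))) (by simpa using hjk)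
  refine ⟨_, _, admissible01_timeShare U, ?_⟩
  have hL1 := logb_imCard1_timeShare1_le U
  have hL2 := logb_imCard2_timeShare2_le U
  rw [hU] at hL1 hL2
  have h₁ : logb 2 (imCard1 (timeShare1 U)) / C1 ≤ k / cap := by
    rw [div_le_div_iff₀ hC1 hcap]
    have hj : C2 * k ≤ j * cap := (div_le_iff₀ hcap).1 hj₁
    nlinarith
  have h₂ : logb 2 (imCard2 (timeShare2 U)) / C2 ≤ k / cap + 1 / C2 := by
    rw [div_le_iff₀ hC2, add_mul, one_div_mul_cancel hC2.ne', div_mul_eq_mul_div,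
      mul_comm (k : ℝ)]
    linarith
  have hceil₁ := Int.ceil_lt_add_one (logb 2 (imCard1 (timeShare1 U)) / C1)
  have hceil₂ := Int.ceil_lt_add_one (logb 2 (imCard2 (timeShare2 U)) / C2)
  have hC2inv : 0 < 1 / C2 := one_div_pos.2 hC2
  rw [codeLength, Int.cast_max]
  exact max_le (by linarith) (by linarith)

theorem exists_admissible01_capacity01_sub_le_rate01 {C1 C2 : ℝ} (hC : C2 ≤ C1) (hC2 : 0 < C2)
    {k : ℕ} (hk : 0 < k) :
    ∃ (φ1 : (Fin k → Fin 2) × (Fin k → Fin 2) → ℕ) (φ2 : (Fin k → Fin 2) → ℕ),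
      Admissible01 φ1 φ2 ∧
      capacity01 C1 C2 - (1 + 1 / C2) * capacity01 C1 C2 ^ 2 / k ≤ rate01 C1 C2 φ1 φ2 := by
  obtain ⟨φ1, φ2, h, hN⟩ := exists_admissible01_codeLength_le hC hC2 k
  refine ⟨φ1, φ2, h, ?_⟩
  have hC1 : 0 < C1 := hC2.trans_le hC
  set cap := capacity01 C1 C2
  set B := 1 + 1 / C2
  set N : ℝ := (codeLength C1 C2 φ1 φ2 : ℝ)
  have hcap : 0 < cap := capacity01_pos hC1 hC2
  have hB : 0 < B := by positivity
  have hk' : (0 : ℝ) < k := Nat.cast_pos.2 hk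
  have hNpos : 0 < N := by
    have := h.natCast_le_capacity01_mul_codeLength hC1 hC2
    by_contra! hN
    nlinarith
  rw [rate01_eq, le_div_iff₀ hNpos]
  rcases le_or_gt (cap - B * cap ^ 2 / k) 0 with hneg | hpos
  · nlinarith
  · calc (cap - B * cap ^ 2 / k) * N ≤ (cap - B * cap ^ 2 / k) * (k / cap + B) :=
          mul_le_mul_of_nonneg_left hN hpos.le
      _ = k - B ^ 2 * cap ^ 2 / k := by field_simp; ring
      _ ≤ k := sub_le_self _ (by positivity)

open Filter Topology in
theorem capacity_01 (C1 C2 : ℝ) (hC : C2 ≤ C1) (hC2 : 0 < C2) :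
    sSup {r : ℝ | ∃ (k : ℕ), 0 < k ∧ ∃ (φ1 : (Fin k → Fin 2) × (Fin k → Fin 2) → ℕ)
      (φ2 : (Fin k → Fin 2) → ℕ),
      Admissible01 φ1 φ2 ∧ r = rate01 C1 C2 φ1 φ2} =
    (C1 - C2) * Real.logb 3 2 + C2 := by
  have hC1 : 0 < C1 := hC2.trans_le hC
  refine IsLUB.csSup_eq (a := capacity01 C1 C2) ⟨?_, fun b hb => ?_⟩ ?_
  · rintro r ⟨k, hk, φ1, φ2, h, rfl⟩
    exact h.rate01_le_capacity01 hC1 hC2 hk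
  · have hlim : Tendsto (fun k : ℕ => capacity01 C1 C2 - (1 + 1 / C2) * capacity01 C1 C2 ^ 2 / k)
        atTop (𝓝 (capacity01 C1 C2)) := by
      simpa using tendsto_const_nhds.sub (tendsto_const_div_atTop_nhds_zero_nat (𝕜 := ℝ) _)
    refine le_of_tendsto hlim (eventually_atTop.2 ⟨1, fun k hk => ?_⟩)
    obtain ⟨φ1, φ2, h, hle⟩ := exists_admissible01_capacity01_sub_le_rate01 hC hC2 hk
    exact hle.trans (hb ⟨k, hk, φ1, φ2, h, rfl⟩)
  · obtain ⟨φ1, φ2, h, -⟩ := exists_admissible01_codeLength_le hC hC2 1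
    exact ⟨_, 1, one_pos, φ1, φ2, h, rfl⟩
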